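/- Let A be an h-skew-adjoint ℂ-linear endomorphism of ℂ^{n+1}, and let λ, μ ∈ ℂ be two distinct eigenvalues of A (each admitting a nonzero eigenvector) with Re(λ) ≠ 0 and Re(μ) ≠ 0. Then μ = −conj(λ); i.e. an h-skew-adjoint endomorphism has at most one pair of eigenvalues with nonzero real part, and such a pair has the form {λ, −conj(λ)}. -/

import Mathlib

open Complex

/-- The standard hermitian form of signature `(n,1)` on `ℂ^{n+1}`. -/
noncomputable def hForm (n : ℕ) (x y : Fin (n+1) → ℂ) : ℂ :=
  (∑ i : Fin n, x i.castSucc * (starRingEnd ℂ) (y i.castSucc))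
    - x (Fin.last n) * (starRingEnd ℂ) (y (Fin.last n))

/-- An endomorphism of `ℂ^{n+1}` is `h`-skew-adjoint if
`h(Ax,y) + h(x,Ay) = 0` for all `x, y`. -/
def IsHSkewAdjoint (n : ℕ) (A : (Fin (n+1) → ℂ) →ₗ[ℂ] (Fin (n+1) → ℂ)) : Prop :=
  ∀ x y : Fin (n+1) → ℂ, hForm n (A x) y + hForm n x (A y) = 0

open ComplexConjugate

/-!
For eigenvectors `u`, `v` of a skew-adjoint `A` with eigenvalues `a`, `b`, skew-adjointness gives
`(a + conj b) h(u, v) = 0`. So an eigenvector whose eigenvalue has nonzero real part is isotropic,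
and if `μ ≠ -conj λ` the eigenvectors `x`, `y` span a totally isotropic subspace. Since `h` is
positive definite on the hyperplane `x_{n+1} = 0`, totally isotropic subspaces are at most lines,
so `x` and `y` are proportional and `λ = μ`.
-/

section HForm

variable {n : ℕ}

lemma hForm_smul_left (c : ℂ) (x y : Fin (n+1) → ℂ) :
    hForm n (c • x) y = c * hForm n x y := by
  simp only [hForm, Pi.smul_apply, smul_eq_mul, mul_sub, Finset.mul_sum]
  ring_nf

lemma hForm_smul_right (c : ℂ) (x y : Fin (n+1) → ℂ) :
    hForm n x (c • y) = conj c * hForm n x y := by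
  simp only [hForm, Pi.smul_apply, smul_eq_mul, map_mul, mul_sub, Finset.mul_sum, mul_left_comm]

lemma hForm_sub_left (x z y : Fin (n+1) → ℂ) :
    hForm n (x - z) y = hForm n x y - hForm n z y := by
  simp only [hForm, Pi.sub_apply, sub_mul, Finset.sum_sub_distrib]
  ring

lemma hForm_sub_right (x y z : Fin (n+1) → ℂ) :
    hForm n x (y - z) = hForm n x y - hForm n x z := by
  simp only [hForm, Pi.sub_apply, map_sub, mul_sub, Finset.sum_sub_distrib]
  ring

lemma conj_hForm (x y : Fin (n+1) → ℂ) : conj (hForm n x y) = hForm n y x := by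
  simp only [hForm, map_sub, map_sum, map_mul, conj_conj, mul_comm]

lemma eq_zero_of_hForm_self_eq_zero_of_last_eq_zero {x : Fin (n+1) → ℂ}
    (hx : hForm n x x = 0) (hlast : x (Fin.last n) = 0) : x = 0 := by
  have hsum : ∑ i : Fin n, normSq (x i.castSucc) = 0 := by
    exact_mod_cast (by simpa [hForm, hlast, mul_conj] using hx :
      ∑ i : Fin n, (normSq (x i.castSucc) : ℂ) = 0)
  have hcoord (i : Fin n) : normSq (x i.castSucc) = 0 :=
    (Finset.sum_eq_zero_iff_of_nonneg fun j _ => normSq_nonneg _).mp hsum i (Finset.mem_univ i)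
  funext j
  induction j using Fin.lastCases with
  | last => exact hlast
  | cast i => exact normSq_eq_zero.mp (hcoord i)

lemma last_ne_zero_of_hForm_self_eq_zero {y : Fin (n+1) → ℂ} (hy : y ≠ 0)
    (hyy : hForm n y y = 0) : y (Fin.last n) ≠ 0 :=
  fun hlast => hy (eq_zero_of_hForm_self_eq_zero_of_last_eq_zero hyy hlast)

lemma exists_eq_smul_of_hForm_eq_zero {x y : Fin (n+1) → ℂ} (hy : y ≠ 0)
    (hxx : hForm n x x = 0) (hyy : hForm n y y = 0) (hxy : hForm n x y = 0) :
    ∃ c : ℂ, x = c • y := by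
  have hyx : hForm n y x = 0 := by rw [← conj_hForm, hxy, map_zero]
  have hylast := last_ne_zero_of_hForm_self_eq_zero hy hyy
  set c := x (Fin.last n) / y (Fin.last n)
  refine ⟨c, sub_eq_zero.mp (eq_zero_of_hForm_self_eq_zero_of_last_eq_zero ?_ ?_)⟩
  · simp only [hForm_sub_left, hForm_sub_right, hForm_smul_left, hForm_smul_right,
      hxx, hyy, hxy, hyx]
    ring
  · simp only [Pi.sub_apply, Pi.smul_apply, smul_eq_mul, c]
    field_simp
    ring

end HForm

namespace IsHSkewAdjoint

variable {n : ℕ} {A : (Fin (n+1) → ℂ) →ₗ[ℂ] (Fin (n+1) → ℂ)}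

lemma add_conj_mul_hForm_eq_zero (hA : IsHSkewAdjoint n A) {u v : Fin (n+1) → ℂ} {a b : ℂ}
    (hu : A u = a • u) (hv : A v = b • v) : (a + conj b) * hForm n u v = 0 := by
  have h := hA u v
  rw [hu, hv, hForm_smul_left, hForm_smul_right] at h
  linear_combination h

lemma hForm_self_eq_zero (hA : IsHSkewAdjoint n A) {u : Fin (n+1) → ℂ} {a : ℂ}
    (hu : A u = a • u) (ha : a.re ≠ 0) : hForm n u u = 0 := by
  refine (mul_eq_zero.mp (hA.add_conj_mul_hForm_eq_zero hu hu)).resolve_left ?_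
  rw [add_conj]
  exact ofReal_ne_zero.mpr (mul_ne_zero two_ne_zero ha)

end IsHSkewAdjoint

theorem eigenvalue_pair_of_re_ne_zero_general (n : ℕ)
    (A : (Fin (n+1) → ℂ) →ₗ[ℂ] (Fin (n+1) → ℂ)) (hA : IsHSkewAdjoint n A)
    (lam mu : ℂ) (hne : lam ≠ mu) (hrel : lam.re ≠ 0) (hrem : mu.re ≠ 0)
    (hlam : ∃ x : Fin (n+1) → ℂ, x ≠ 0 ∧ A x = lam • x)
    (hmu : ∃ y : Fin (n+1) → ℂ, y ≠ 0 ∧ A y = mu • y) :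
    mu = -(starRingEnd ℂ) lam := by
  obtain ⟨x, hx0, hx⟩ := hlam
  obtain ⟨y, hy0, hy⟩ := hmu
  by_contra hcon
  have hlam_mu : lam + conj mu ≠ 0 := fun h =>
    hcon (by rw [← conj_conj mu, eq_neg_of_add_eq_zero_right h, map_neg])
  have hxy : hForm n x y = 0 :=
    (mul_eq_zero.mp (hA.add_conj_mul_hForm_eq_zero hx hy)).resolve_left hlam_mu
  obtain ⟨c, rfl⟩ := exists_eq_smul_of_hForm_eq_zero hy0
    (hA.hForm_self_eq_zero hx hrel) (hA.hForm_self_eq_zero hy hrem) hxy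
  refine hne (smul_left_injective ℂ hx0 ?_)
  calc lam • c • y = A (c • y) := hx.symm
    _ = mu • c • y := by rw [map_smul, hy, smul_comm]

/-- an `h`-skew-adjoint endomorphism has at most one pair of
eigenvalues with nonzero real part, and such a pair has the form
`{λ, −conj(λ)}`: two distinct eigenvalues `λ ≠ μ` with nonzero real parts
satisfy `μ = −conj(λ)`. -/
theorem eigenvalue_pair_of_re_ne_zero (n : ℕ) (hn : 1 ≤ n)
    (A : (Fin (n+1) → ℂ) →ₗ[ℂ] (Fin (n+1) → ℂ)) (hA : IsHSkewAdjoint n A)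
    (lam mu : ℂ) (hne : lam ≠ mu) (hrel : lam.re ≠ 0) (hrem : mu.re ≠ 0)
    (hlam : ∃ x : Fin (n+1) → ℂ, x ≠ 0 ∧ A x = lam • x)
    (hmu : ∃ y : Fin (n+1) → ℂ, y ≠ 0 ∧ A y = mu • y) :
    mu = -(starRingEnd ℂ) lam :=
  eigenvalue_pair_of_re_ne_zero_general n A hA lam mu hne hrel hrem hlam hmu
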